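/- For λ ∈ Q', the formal sum ξ^λ = Σ_{w∈W}(−1)^{ℓ(w)} e^{w∘λ} is non-zero if and only if the stabilizer W_λ^∘ = {w ∈ W : w∘λ = λ} of λ under the circle action is trivial. -/

import Mathlib

open scoped Classical

noncomputable section

/-- An axiomatization of the root datum of a Kac--Moody algebra `𝔤` associated to an
`n × n` generalized Cartan matrix, realized on the lattice `V` of integral weights
(the subgroup of `𝔥*` spanned by the weight lattice `P`, the root lattice `Q` and a
Weyl vector).  `alpha i` are the simple roots, `pair i v = v(α_i^∨)` is the pairing
with the simple coroots, and `mult β = dim 𝔤_β` is the root multiplicity function.  -/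
structure KacMoody (n : ℕ) (V : Type) [AddCommGroup V] where
  /-- the simple roots `α_i` -/
  alpha : Fin n → V
  /-- the pairing with the simple coroots, `pair i v = v(α_i^∨)` -/
  pair : Fin n → V →+ ℤ
  /-- the diagonal entries of the generalized Cartan matrix `a_{ij} = pair i (alpha j)` are `2` -/
  pair_self : ∀ i, pair i (alpha i) = 2
  /-- the off-diagonal entries of the generalized Cartan matrix are nonpositive -/
  pair_offdiag : ∀ i j, i ≠ j → pair i (alpha j) ≤ 0
  /-- `a_{ij} = 0 → a_{ji} = 0` -/
  pair_zero_iff : ∀ i j, pair i (alpha j) = 0 → pair j (alpha i) = 0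
  /-- the simple roots are linearly independent -/
  indep : ∀ c : Fin n → ℤ, ∑ i, c i • alpha i = 0 → ∀ i, c i = 0
  /-- root multiplicities: `mult β = dim 𝔤_β`; `β ≠ 0` is a root iff `mult β ≠ 0` -/
  mult : V → ℕ
  /-- simple roots are roots of multiplicity one -/
  mult_simple : ∀ i, mult (alpha i) = 1
  /-- every root is positive or negative -/
  root_pm : ∀ β : V, mult β ≠ 0 → β ≠ 0 →
    (∃ c : Fin n → ℕ, β = ∑ i, c i • alpha i) ∨ (∃ c : Fin n → ℕ, β = -∑ i, c i • alpha i)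
  /-- multiplicities are invariant under the simple reflections (hence under the Weyl group) -/
  mult_reflect : ∀ (i) (v : V), mult (v - pair i v • alpha i) = mult v
  /-- a given `μ` admits only finitely many partitions into positive roots (counted
  with multiplicity); this is automatic for genuine Kac--Moody root systems -/
  part_finite : ∀ μ : V,
    {p : Finset (V × ℕ) |
      (∀ x ∈ p, (mult x.1 ≠ 0 ∧ x.1 ≠ 0 ∧ x.1 ∈ {v : V | ∃ c : Fin n → ℕ,
          v = ∑ i, c i • alpha i}) ∧ 1 ≤ x.2 ∧ x.2 ≤ mult x.1) ∧
        ∑ x ∈ p, x.1 = μ}.Finite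

/-- the multiplicative group structure on `AddAut M` (composition), as in the older Mathlib -/
instance addAutMulGroup (M : Type*) [Add M] : Group (AddAut M) where
  mul g h := AddEquiv.trans h g
  one := AddEquiv.refl _
  inv := AddEquiv.symm
  mul_assoc _ _ _ := rfl
  one_mul _ := rfl
  mul_one _ := rfl
  inv_mul_cancel := AddEquiv.self_trans_symm

namespace KacMoody

variable {n : ℕ} {V : Type} [AddCommGroup V] (K : KacMoody n V)

/-- the positive root cone `Q⁺` (the `ℕ`-span of the simple roots) -/
def QP : Set V := {v | ∃ c : Fin n → ℕ, v = ∑ i, c i • K.alpha i}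

/-- `β` is a positive root of `𝔤` -/
def IsPosRoot (β : V) : Prop := K.mult β ≠ 0 ∧ β ≠ 0 ∧ β ∈ K.QP

/-- the underlying function of the simple reflection `s_i` -/
def sAux (i : Fin n) : V → V := fun v => v - K.pair i v • K.alpha i

lemma sAux_add (i : Fin n) (a b : V) : K.sAux i (a + b) = K.sAux i a + K.sAux i b := by
  simp only [sAux, map_add, add_smul]; abel

lemma sAux_invol (i : Fin n) : Function.Involutive (K.sAux i) := by
  intro v
  simp only [sAux, map_sub, map_zsmul, K.pair_self i, smul_eq_mul]
  have h2 : K.pair i v - K.pair i v * 2 = -(K.pair i v) := by ring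
  rw [h2, neg_smul, sub_neg_eq_add]
  abel

/-- the simple reflection `s_i`, as an automorphism of the weight lattice -/
def s (i : Fin n) : AddAut V :=
  { toFun := K.sAux i
    invFun := K.sAux i
    left_inv := K.sAux_invol i
    right_inv := K.sAux_invol i
    map_add' := K.sAux_add i }

/-- the Weyl group `W` of `𝔤`, realized as the subgroup of `Aut(𝔥*)` generated by the
simple reflections -/
def Wgrp : Subgroup (AddAut V) := Subgroup.closure (Set.range K.s)

/-- the length `ℓ(w)` of an element of the Weyl group: the minimal length of an
expression of `w` as a product of simple reflections -/
def len (w : AddAut V) : ℕ :=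
  sInf {k | ∃ l : List (Fin n), l.length = k ∧ (l.map K.s).prod = w}

/-- the set `P⁺` of dominant integral weights -/
def Pplus : Set V := {v | ∀ i, 0 ≤ K.pair i v}

/-- `β` is a real root: it is `W`-conjugate to a simple root -/
def IsRealRoot (β : V) : Prop := ∃ w ∈ K.Wgrp, ∃ i, w (K.alpha i) = β

/-- `β` is an imaginary root: a root that is not real -/
def IsImRoot (β : V) : Prop := K.mult β ≠ 0 ∧ β ≠ 0 ∧ ¬K.IsRealRoot β

/-- the cone `Q⁻_im` generated by the negative imaginary roots -/
def coneIm : Set V :=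
  (AddSubmonoid.closure {v : V | K.IsImRoot v ∧ -v ∈ K.QP} : AddSubmonoid V)

/-- the element of `Q⁺` with coordinates `c` in the basis of simple roots -/
def toV (c : Fin n →₀ ℕ) : V := ∑ i, c i • K.alpha i

/-- the coordinates of an element of `Q⁺` in the basis of simple roots -/
def coordOf (v : V) : Fin n →₀ ℕ :=
  if h : ∃ c : Fin n →₀ ℕ, K.toV c = v then h.choose else 0

/-- `p` is an admissible partition of `μ`: a finite subset of
`𝒫 = {(α, i) : α ∈ Φ⁺, 1 ≤ i ≤ mult α}` whose parts sum to `μ` -/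
def IsPart (μ : V) (p : Finset (V × ℕ)) : Prop :=
  (∀ x ∈ p, (K.mult x.1 ≠ 0 ∧ x.1 ≠ 0 ∧ x.1 ∈ K.QP) ∧ 1 ≤ x.2 ∧ x.2 ≤ K.mult x.1) ∧
    ∑ x ∈ p, x.1 = μ

lemma isPart_finite (μ : V) : {p : Finset (V × ℕ) | K.IsPart μ p}.Finite := K.part_finite μ

/-- the finite set `𝒫(μ)` of admissible partitions of `μ` -/
def partsFinset (μ : V) : Finset (Finset (V × ℕ)) := (K.isPart_finite μ).toFinset

/-- the Kim--Lee function `H(μ; q) = Σ_{𝔭 ∈ 𝒫(μ)} (-q)^{|𝔭|}`, i.e. the coefficient of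
`e^{-μ}` in `Π_{α ∈ Φ⁺} (1 - q e^{-α})^{mult α}` -/
def H (μ : V) : Polynomial ℤ := ∑ p ∈ K.partsFinset μ, (-Polynomial.X) ^ p.card

/-- the Weyl denominator `Π_{α ∈ Φ⁺} (1 - e^{-α})^{mult α}`, expanded as a formal sum;
the coefficient at `c` is the coefficient of `e^{-toV c}` -/
def den : MvPowerSeries (Fin n) ℤ :=
  fun c => ∑ p ∈ K.partsFinset (K.toV c), (-1 : ℤ) ^ p.card

/-- `ξ^λ = Σ_{w ∈ W} (-1)^{ℓ(w)} e^{w∘λ}` as a formal sum supported on `Q⁻`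
(for `λ ∈ Q'`); the coefficient at `c` is the coefficient of `e^{-toV c}` -/
def xiMv (ρ lam : V) : MvPowerSeries (Fin n) ℤ :=
  fun c => ∑ᶠ w ∈ {w : AddAut V | w ∈ K.Wgrp ∧ w (lam + ρ) - ρ = -K.toV c},
    (-1 : ℤ) ^ K.len w

/-- the Poincaré series `χ(q) = Σ_{w ∈ W} q^{ℓ(w)}` of the Weyl group -/
def chiPS : PowerSeries ℤ :=
  PowerSeries.mk fun k => (Nat.card {w : AddAut V | w ∈ K.Wgrp ∧ K.len w = k} : ℤ)

/-- the inversion set `Φ(w⁻¹) = {α ∈ Φ⁺ : wα < 0}` -/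
def Inversions (w : AddAut V) : Set V := {β | K.IsPosRoot β ∧ -(w β) ∈ K.QP}

/-- the number of inversions of `w`, counted with multiplicity -/
def NInv (w : AddAut V) : ℕ := ∑ᶠ β ∈ K.Inversions w, K.mult β

/-- a finite subset of `𝒫 = {(α, i) : α ∈ Φ⁺, 1 ≤ i ≤ mult α}` -/
def IsChoice (p : Finset (V × ℕ)) : Prop :=
  ∀ x ∈ p, K.IsPosRoot x.1 ∧ 1 ≤ x.2 ∧ x.2 ≤ K.mult x.1

/-- the formal sum expansion of `Δ^w`, the image of
`Δ = Π_{α ∈ Φ⁺} ((1 - q e^{-α})/(1 - e^{-α}))^{mult α}` under `w ∈ W`: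
`Δ^w = Π_{α ∈ Φ(w⁻¹)} ((q - e^{-α})/(1 - e^{-α})) ·
Π_{α ∈ Φ⁺ ∖ Φ(w⁻¹)} ((1 - q e^{-α})/(1 - e^{-α}))^{mult α}`, where numerators are
expanded by choosing a finite subset `pf.1` of `𝒫` and denominators by choosing a
finitely supported multiset `pf.2` on `𝒫`. -/
def deltaW (w : AddAut V) : MvPowerSeries (Fin n) (PowerSeries ℤ) :=
  fun c =>
    ∑ᶠ pf ∈ {pf : Finset (V × ℕ) × ((V × ℕ) →₀ ℕ) |
        K.IsChoice pf.1 ∧ (∀ x ∈ pf.2.support, K.IsPosRoot x.1 ∧ 1 ≤ x.2 ∧ x.2 ≤ K.mult x.1) ∧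
        (∑ x ∈ pf.1, x.1) + (pf.2.sum fun x k => k • x.1) = K.toV c},
      ((-1 : ℤ) ^ pf.1.card) •
        (PowerSeries.X : PowerSeries ℤ) ^
          (K.NInv w + (pf.1.filter fun x => x.1 ∉ K.Inversions w).card
            - (pf.1.filter fun x => x.1 ∈ K.Inversions w).card)

/-- the formal sum `ℳ(q) = Σ_{w ∈ W} Δ^w`, a formal sum supported on `Q⁻` with
coefficients in `ℤ[[q]]`; the coefficient at `c` is the coefficient of `e^{-toV c}` -/
def Mcal : MvPowerSeries (Fin n) (PowerSeries ℤ) :=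
  fun c => PowerSeries.mk fun m =>
    ∑ᶠ w ∈ {w : AddAut V | w ∈ K.Wgrp},
      PowerSeries.coeff m (MvPowerSeries.coeff c (K.deltaW w))

/-- `Q' = ⋂_{w ∈ W} w ∘ Q⁻`, where `∘` is the circle (dot) action `w ∘ λ = w(λ+ρ) - ρ` -/
def Qprime (ρ : V) : Set V := {v | ∀ w ∈ K.Wgrp, -(w (v + ρ) - ρ) ∈ K.QP}

/-- `ξ^λ = Σ_{w ∈ W} (-1)^{ℓ(w)} e^{w∘λ}` as a formal sum on all of `𝔥*`:
`xiFun ρ lam v` is the coefficient of `e^v` -/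
def xiFun (ρ lam : V) : V → ℤ :=
  fun v => ∑ᶠ w ∈ {w : AddAut V | w ∈ K.Wgrp ∧ w (lam + ρ) - ρ = v}, (-1 : ℤ) ^ K.len w

/-- the numerator `Σ_{w ∈ W} (-1)^{ℓ(w)} e^{w(λ+ρ)}` of `π^λ`, as a formal sum:
`numFun ρ lam v` is the coefficient of `e^v` -/
def numFun (ρ lam : V) : V → ℤ :=
  fun v => ∑ᶠ w ∈ {w : AddAut V | w ∈ K.Wgrp ∧ w (lam + ρ) = v}, (-1 : ℤ) ^ K.len w

/-- the map `φ_i : 𝒫(-λ) → 𝒫(-s_i ∘ λ)` on admissible partitions -/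
def phi (i : Fin n) (p : Finset (V × ℕ)) : Finset (V × ℕ) :=
  if ∃ x ∈ p, x.1 = K.alpha i then
    (p.filter fun x => x.1 ≠ K.alpha i).image fun x => (K.s i x.1, x.2)
  else insert (K.alpha i, 1) (p.image fun x => (K.s i x.1, x.2))

/-- `m(𝔭, w) = |𝔭| - 2 ⬝ #{(β, j) ∈ 𝔭 : wβ < 0}` -/
def mpw (w : AddAut V) (p : Finset (V × ℕ)) : ℤ :=
  (p.card : ℤ) - 2 * (p.filter fun x => -(w x.1) ∈ K.QP ∧ w x.1 ≠ 0).card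

/-- `|wβ|`: the positive root among `± wβ` -/
def wabs (w : AddAut V) (β : V) : V := if -(w β) ∈ K.QP then -(w β) else w β

/-- `Σ_{α ∈ Φ(w⁻¹)} mult α • (-wα)`, the forced monomial appearing when `w` acts on the
Weyl denominator -/
def invWt (w : AddAut V) : V := ∑ᶠ β ∈ K.Inversions w, K.mult β • (-(w β))

/-- the series part of the expansion of `w(Π_{α ∈ Φ⁺} (1 - e^{-α})^{mult α})`:
by the defining action `w(1 - e^{-α}) = 1 - e^{-wα}` if `wα > 0` and
`w(1 - e^{-α}) = (-e^{-wα})(1 - e^{wα})` if `wα < 0`, one has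
`w(Π_{α ∈ Φ⁺} (1 - e^{-α})^{mult α}) = (-1)^{NInv w} e^{invWt w} · wDen w`, where
`wDen w = Π_{α ∈ Φ⁺, (α,i) ∈ 𝒫} (1 - e^{-|wα|})`; the coefficient at `c` is the
coefficient of `e^{-toV c}` -/
def wDen (w : AddAut V) : MvPowerSeries (Fin n) ℤ :=
  fun c => ∑ᶠ p ∈ {p : Finset (V × ℕ) | K.IsChoice p ∧
      (∑ x ∈ p, K.wabs w x.1) = K.toV c},
    (-1 : ℤ) ^ p.card

/-- for a word `l = (i_1, …, i_ℓ)`, the root `s_{i_1} ⋯ s_{i_{k-1}} (α_{i_k})` -/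
def prefixRoot (l : List (Fin n)) (k : Fin l.length) : V :=
  ((l.take k).map K.s).prod (K.alpha (l.get k))

end KacMoody

/-!
Put `μ = λ + ρ`, so that `w ∘ λ = λ` iff `w μ = μ`. The sign `(-1)^ℓ(w)` is a character of `W`
(the determinant of `w` on the root lattice `Q`). If the stabilizer `W_μ` contains an odd `τ`,
then `w ↦ w τ` pairs the terms of every coefficient of `ξ^λ` with opposite signs, so `ξ^λ = 0`;
if `W_μ` is trivial, the coefficient of `e^λ` is `1`.

So it suffices to find an odd element in a nontrivial `W_μ`, which we may take to be finite:
otherwise every fibre of `w ↦ w ∘ λ` is empty or infinite, and `finsum` over an infinite set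
is `0`. Since `λ ∈ Q'`, the orbit `W μ` lies in `ρ - Q⁺`, hence contains a highest element
`ν = w₀ μ`, which is dominant. If `⟨ν, α_i^∨⟩ = 0`, then `w₀⁻¹ s_i w₀` is an odd element of `W_μ`.
Otherwise each `g ∈ W_ν` sends every simple root to a positive root (else `g s_i ν` would lie
above `ν`), and the deletion argument for words in the `s_i` shows that `g` fixes every simple
root. Then `g - 1` maps `V` into `Q` and kills `Q`, so the finite order of `g` forces `g = 1`.
-/

@[simp] theorem addAut_mul_apply {M : Type*} [Add M] (g h : AddAut M) (x : M) :
    (g * h) x = g (h x) := rfl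

@[simp] theorem addAut_one_apply {M : Type*} [Add M] (x : M) : (1 : AddAut M) x = x := rfl

@[simp] theorem addAut_inv_apply_self {M : Type*} [Add M] (g : AddAut M) (x : M) :
    g⁻¹ (g x) = x :=
  g.symm_apply_apply x

@[simp] theorem addAut_apply_inv_self {M : Type*} [Add M] (g : AddAut M) (x : M) :
    g (g⁻¹ x) = x :=
  g.apply_symm_apply x

theorem finsum_mem_eq_zero_of_bijOn_of_neg {α M : Type*} [AddCommGroup M] [IsAddTorsionFree M]
    {s : Set α} {f : α → M} (e : α → α) (he : Set.BijOn e s s)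
    (hf : ∀ x ∈ s, f (e x) = -f x) : ∑ᶠ x ∈ s, f x = 0 := by
  have h := finsum_mem_eq_of_bijOn e he (g := fun x => -f x) fun x hx => by rw [hf x hx, neg_neg]
  simp_rw [finsum_neg_distrib] at h
  exact self_eq_neg.mp h

namespace KacMoody

variable {n : ℕ} {V : Type} [AddCommGroup V] (K : KacMoody n V)

section Reflections

lemma s_apply (i : Fin n) (v : V) : K.s i v = v - K.pair i v • K.alpha i := rfl

lemma alpha_ne_zero (i : Fin n) : K.alpha i ≠ 0 := fun h => by
  simpa [h] using K.pair_self i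

lemma s_alpha_self (i : Fin n) : K.s i (K.alpha i) = -K.alpha i := by
  rw [s_apply, K.pair_self, two_zsmul]; abel

lemma s_inv (i : Fin n) : (K.s i)⁻¹ = K.s i :=
  inv_eq_of_mul_eq_one_right (AddEquiv.ext (K.sAux_invol i))

lemma s_mem_Wgrp (i : Fin n) : K.s i ∈ K.Wgrp :=
  Subgroup.subset_closure ⟨i, rfl⟩

lemma mult_apply {w : AddAut V} (hw : w ∈ K.Wgrp) (v : V) : K.mult (w v) = K.mult v := by
  induction hw using Subgroup.closure_induction generalizing v with
  | mem x hx => obtain ⟨i, rfl⟩ := hx; exact K.mult_reflect i v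
  | one => rfl
  | mul x y _ _ hx hy => rw [addAut_mul_apply, hx, hy]
  | inv x _ hx => rw [← hx, addAut_apply_inv_self]

lemma mult_apply_alpha {w : AddAut V} (hw : w ∈ K.Wgrp) (j : Fin n) :
    K.mult (w (K.alpha j)) ≠ 0 := by
  rw [K.mult_apply hw, K.mult_simple]; exact one_ne_zero

def wordProd (l : List (Fin n)) : AddAut V := (l.map K.s).prod

@[simp] lemma wordProd_nil : K.wordProd [] = 1 := rfl

@[simp] lemma wordProd_cons (i : Fin n) (l : List (Fin n)) :
    K.wordProd (i :: l) = K.s i * K.wordProd l := by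
  simp [wordProd]

@[simp] lemma wordProd_append (l₁ l₂ : List (Fin n)) :
    K.wordProd (l₁ ++ l₂) = K.wordProd l₁ * K.wordProd l₂ := by
  simp [wordProd]

lemma wordProd_singleton (i : Fin n) : K.wordProd [i] = K.s i := by simp

lemma wordProd_mem_Wgrp (l : List (Fin n)) : K.wordProd l ∈ K.Wgrp := by
  induction l with
  | nil => exact one_mem _
  | cons i l ih => rw [wordProd_cons]; exact mul_mem (K.s_mem_Wgrp i) ih

lemma wordProd_reverse (l : List (Fin n)) : K.wordProd l.reverse = (K.wordProd l)⁻¹ := by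
  induction l with
  | nil => simp
  | cons i l ih => simp [ih, K.s_inv]

lemma exists_wordProd_eq {w : AddAut V} (hw : w ∈ K.Wgrp) : ∃ l, K.wordProd l = w := by
  induction hw using Subgroup.closure_induction with
  | mem x hx => obtain ⟨i, rfl⟩ := hx; exact ⟨[i], K.wordProd_singleton i⟩
  | one => exact ⟨[], rfl⟩
  | mul x y _ _ hx hy =>
      obtain ⟨l₁, rfl⟩ := hx
      obtain ⟨l₂, rfl⟩ := hy
      exact ⟨l₁ ++ l₂, K.wordProd_append l₁ l₂⟩
  | inv x _ hx =>
      obtain ⟨l, rfl⟩ := hx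
      exact ⟨l.reverse, K.wordProd_reverse l⟩

lemma exists_wordProd_length_eq_len {w : AddAut V} (hw : w ∈ K.Wgrp) :
    ∃ l, K.wordProd l = w ∧ l.length = K.len w := by
  obtain ⟨l, hl⟩ := K.exists_wordProd_eq hw
  obtain ⟨l', hlen, hprod⟩ := Nat.sInf_mem (s := {k | ∃ l : List (Fin n), l.length = k ∧
    (l.map K.s).prod = w}) ⟨l.length, l, rfl, hl⟩
  exact ⟨l', hprod, hlen⟩

lemma len_one : K.len (1 : AddAut V) = 0 :=
  Nat.sInf_eq_zero.mpr (Or.inl ⟨[], rfl, rfl⟩)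

end Reflections

section RootLattice

def rootLattice : Submodule ℤ V := Submodule.span ℤ (Set.range K.alpha)

lemma mem_rootLattice_iff {v : V} :
    v ∈ K.rootLattice ↔ ∃ c : Fin n → ℤ, ∑ i, c i • K.alpha i = v :=
  Submodule.mem_span_range_iff_exists_fun ℤ

lemma alpha_mem_rootLattice (i : Fin n) : K.alpha i ∈ K.rootLattice :=
  Submodule.subset_span ⟨i, rfl⟩

lemma alpha_mem_QP (i : Fin n) : K.alpha i ∈ K.QP :=
  ⟨Pi.single i 1, by simp [Pi.single_apply]⟩

lemma mem_rootLattice_of_mem_QP {v : V} (hv : v ∈ K.QP) : v ∈ K.rootLattice := by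
  obtain ⟨c, rfl⟩ := hv
  exact K.mem_rootLattice_iff.mpr ⟨fun i => c i, by simp [natCast_zsmul]⟩

lemma apply_sub_self_mem_rootLattice {w : AddAut V} (hw : w ∈ K.Wgrp) (v : V) :
    w v - v ∈ K.rootLattice := by
  induction hw using Subgroup.closure_induction generalizing v with
  | mem x hx =>
      obtain ⟨i, rfl⟩ := hx
      simpa [s_apply] using K.rootLattice.neg_mem
        (K.rootLattice.smul_mem (K.pair i v) (K.alpha_mem_rootLattice i))
  | one => simp
  | mul x y _ _ hx hy => simpa using add_mem (hx (y v)) (hy v)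
  | inv x _ hx => simpa using K.rootLattice.neg_mem (hx (x⁻¹ v))

lemma apply_mem_rootLattice {w : AddAut V} (hw : w ∈ K.Wgrp) {v : V}
    (hv : v ∈ K.rootLattice) : w v ∈ K.rootLattice := by
  simpa using add_mem (K.apply_sub_self_mem_rootLattice hw v) hv

lemma apply_eq_self_of_mem_rootLattice {w : AddAut V} (hfix : ∀ j, w (K.alpha j) = K.alpha j)
    {v : V} (hv : v ∈ K.rootLattice) : w v = v := by
  obtain ⟨c, rfl⟩ := K.mem_rootLattice_iff.mp hv
  simp [map_sum, map_zsmul, hfix]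

lemma eq_zero_of_nsmul_eq_zero {v : V} (hv : v ∈ K.rootLattice) {N : ℕ} (hN : N ≠ 0)
    (h : N • v = 0) : v = 0 := by
  obtain ⟨c, rfl⟩ := K.mem_rootLattice_iff.mp hv
  have hc := K.indep (fun i => N * c i) (by simpa [Finset.smul_sum, mul_smul] using h)
  simp [fun i => (mul_eq_zero.mp (hc i)).resolve_left (by exact_mod_cast hN)]

end RootLattice

section Coordinates

-- Coordinates in the basis of simple roots; junk value `0` off the root lattice.
def coord (v : V) : Fin n → ℤ :=
  if h : ∃ c : Fin n → ℤ, ∑ i, c i • K.alpha i = v then h.choose else 0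

lemma sum_coord_smul {v : V} (hv : v ∈ K.rootLattice) : ∑ i, K.coord v i • K.alpha i = v := by
  have h := K.mem_rootLattice_iff.mp hv
  rw [coord, dif_pos h]
  exact h.choose_spec

lemma coord_eq {v : V} {c : Fin n → ℤ} (h : ∑ i, c i • K.alpha i = v) : K.coord v = c := by
  have hv : v ∈ K.rootLattice := K.mem_rootLattice_iff.mpr ⟨c, h⟩
  funext i
  have h0 := K.indep (K.coord v - c) (by
    simp only [Pi.sub_apply, sub_smul, Finset.sum_sub_distrib, K.sum_coord_smul hv, h, sub_self])
  exact sub_eq_zero.mp (h0 i)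

lemma coord_alpha (j : Fin n) : K.coord (K.alpha j) = Pi.single j 1 :=
  K.coord_eq (by simp [Pi.single_apply])

lemma coord_add {a b : V} (ha : a ∈ K.rootLattice) (hb : b ∈ K.rootLattice) :
    K.coord (a + b) = K.coord a + K.coord b :=
  K.coord_eq (by simp [add_smul, Finset.sum_add_distrib, K.sum_coord_smul ha, K.sum_coord_smul hb])

lemma coord_zsmul (k : ℤ) {a : V} (ha : a ∈ K.rootLattice) :
    K.coord (k • a) = k • K.coord a :=
  K.coord_eq (by simp [mul_smul, ← Finset.smul_sum, K.sum_coord_smul ha])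

lemma coord_neg {a : V} (ha : a ∈ K.rootLattice) : K.coord (-a) = -K.coord a := by
  simpa using K.coord_zsmul (-1) ha

lemma coord_sub {a b : V} (ha : a ∈ K.rootLattice) (hb : b ∈ K.rootLattice) :
    K.coord (a - b) = K.coord a - K.coord b := by
  rw [sub_eq_add_neg, K.coord_add ha (neg_mem hb), K.coord_neg hb, sub_eq_add_neg]

lemma mem_QP_iff {v : V} : v ∈ K.QP ↔ v ∈ K.rootLattice ∧ ∀ i, 0 ≤ K.coord v i := by
  refine ⟨fun hv => ⟨K.mem_rootLattice_of_mem_QP hv, fun i => ?_⟩, fun ⟨hv, hc⟩ => ?_⟩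
  · obtain ⟨c, rfl⟩ := hv
    rw [K.coord_eq (c := fun i => (c i : ℤ)) (by simp [natCast_zsmul])]
    exact Int.natCast_nonneg _
  · refine ⟨fun i => (K.coord v i).toNat, ?_⟩
    conv_lhs => rw [← K.sum_coord_smul hv]
    exact Finset.sum_congr rfl fun i _ => by rw [← natCast_zsmul, Int.toNat_of_nonneg (hc i)]

lemma mem_QP_or_neg_mem_QP {β : V} (hβ : K.mult β ≠ 0) : β ∈ K.QP ∨ -β ∈ K.QP := by
  by_cases h0 : β = 0
  · exact Or.inl ⟨0, by simp [h0]⟩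
  rcases K.root_pm β hβ h0 with ⟨c, h⟩ | ⟨c, h⟩
  · exact Or.inl ⟨c, h⟩
  · exact Or.inr ⟨c, by rw [h, neg_neg]⟩

def ht (v : V) : ℤ := ∑ i, K.coord v i

lemma ht_alpha (j : Fin n) : K.ht (K.alpha j) = 1 := by
  simp [ht, K.coord_alpha]

lemma ht_sub {a b : V} (ha : a ∈ K.rootLattice) (hb : b ∈ K.rootLattice) :
    K.ht (a - b) = K.ht a - K.ht b := by
  simp [ht, K.coord_sub ha hb, Finset.sum_sub_distrib]

lemma ht_zsmul (k : ℤ) {a : V} (ha : a ∈ K.rootLattice) : K.ht (k • a) = k * K.ht a := by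
  simp [ht, K.coord_zsmul k ha, Finset.mul_sum]

lemma ht_neg {a : V} (ha : a ∈ K.rootLattice) : K.ht (-a) = -K.ht a := by
  simpa using K.ht_zsmul (-1) ha

lemma ht_nonneg {v : V} (hv : v ∈ K.QP) : 0 ≤ K.ht v :=
  Finset.sum_nonneg fun i _ => (K.mem_QP_iff.mp hv).2 i

lemma ht_pos {v : V} (hv : v ∈ K.QP) (h0 : v ≠ 0) : 0 < K.ht v := by
  obtain ⟨hQ, hc⟩ := K.mem_QP_iff.mp hv
  refine (K.ht_nonneg hv).lt_of_ne fun h => h0 ?_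
  have hz := (Finset.sum_eq_zero_iff_of_nonneg fun i _ => hc i).mp h.symm
  rw [← K.sum_coord_smul hQ]
  exact Finset.sum_eq_zero fun i hi => by rw [hz i hi, zero_smul]

lemma eq_zero_of_mem_QP_of_neg_mem_QP {v : V} (h : v ∈ K.QP) (hneg : -v ∈ K.QP) : v = 0 := by
  by_contra h0
  have := K.ht_nonneg hneg
  rw [K.ht_neg (K.mem_rootLattice_of_mem_QP h)] at this
  linarith [K.ht_pos h h0]

end Coordinates

section Sign

def mat (w : AddAut V) : Matrix (Fin n) (Fin n) ℤ :=
  Matrix.of fun k j => K.coord (w (K.alpha j)) k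

def sgn (w : AddAut V) : ℤ := (K.mat w).det

lemma coord_apply {w : AddAut V} (hw : w ∈ K.Wgrp) {v : V} (hv : v ∈ K.rootLattice) :
    K.coord (w v) = (K.mat w).mulVec (K.coord v) := by
  apply K.coord_eq
  have hcol : ∀ l, ∑ k, K.mat w k l • K.alpha k = w (K.alpha l) := fun l =>
    K.sum_coord_smul (K.apply_mem_rootLattice hw (K.alpha_mem_rootLattice l))
  calc ∑ k, (K.mat w).mulVec (K.coord v) k • K.alpha k
      = ∑ l, K.coord v l • ∑ k, K.mat w k l • K.alpha k := by
        simp only [Matrix.mulVec, dotProduct, Finset.sum_smul, Finset.smul_sum, smul_smul]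
        rw [Finset.sum_comm]
        simp only [mul_comm]
    _ = w v := by
        simp only [hcol, ← map_zsmul, ← map_sum, K.sum_coord_smul hv]

lemma mat_one : K.mat 1 = 1 := by
  ext k j
  simp [mat, K.coord_alpha, Matrix.one_apply, Pi.single_apply]

lemma mat_mul {u w : AddAut V} (hu : u ∈ K.Wgrp) (hw : w ∈ K.Wgrp) :
    K.mat (u * w) = K.mat u * K.mat w := by
  ext k j
  simp only [mat, Matrix.of_apply, addAut_mul_apply]
  rw [K.coord_apply hu (K.apply_mem_rootLattice hw (K.alpha_mem_rootLattice j))]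
  rfl

lemma sgn_one : K.sgn 1 = 1 := by
  rw [sgn, mat_one, Matrix.det_one]

lemma sgn_mul {u w : AddAut V} (hu : u ∈ K.Wgrp) (hw : w ∈ K.Wgrp) :
    K.sgn (u * w) = K.sgn u * K.sgn w := by
  rw [sgn, sgn, sgn, K.mat_mul hu hw, Matrix.det_mul]

lemma sgn_s (i : Fin n) : K.sgn (K.s i) = -1 := by
  have hmat : K.mat (K.s i) = 1 + Matrix.replicateCol Unit (-(Pi.single i 1 : Fin n → ℤ)) *
      Matrix.replicateRow Unit (fun j => K.pair i (K.alpha j)) := by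
    ext k j
    simp only [mat, Matrix.of_apply, s_apply, K.coord_sub (K.alpha_mem_rootLattice j)
      (K.rootLattice.smul_mem _ (K.alpha_mem_rootLattice i)),
      K.coord_zsmul _ (K.alpha_mem_rootLattice i), K.coord_alpha]
    by_cases hk : k = i <;>
      simp [Matrix.one_apply, Matrix.mul_apply, Pi.single_apply, hk, sub_eq_add_neg]
  rw [sgn, hmat, Matrix.det_one_add_replicateCol_mul_replicateRow]
  simp [dotProduct, Pi.single_apply, K.pair_self]

lemma sgn_wordProd (l : List (Fin n)) : K.sgn (K.wordProd l) = (-1) ^ l.length := by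
  induction l with
  | nil => exact K.sgn_one
  | cons i l ih =>
      rw [wordProd_cons, K.sgn_mul (K.s_mem_Wgrp i) (K.wordProd_mem_Wgrp l), K.sgn_s, ih,
        List.length_cons, pow_succ']

lemma sgn_eq_neg_one_pow_len {w : AddAut V} (hw : w ∈ K.Wgrp) : K.sgn w = (-1) ^ K.len w := by
  obtain ⟨l, rfl, hlen⟩ := K.exists_wordProd_length_eq_len hw
  rw [sgn_wordProd, hlen]

end Sign

section NoSimpleInversions

lemma exists_eq_zsmul_alpha_of_neg_s_mem_QP {β : V} {a : Fin n} (hβ : β ∈ K.QP)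
    (hneg : -K.s a β ∈ K.QP) : ∃ c : ℤ, β = c • K.alpha a := by
  obtain ⟨hβQ, hβc⟩ := K.mem_QP_iff.mp hβ
  have haQ := K.alpha_mem_rootLattice a
  have hcoord : K.coord (-K.s a β) = K.pair a β • Pi.single a 1 - K.coord β := by
    rw [show -K.s a β = K.pair a β • K.alpha a - β by rw [s_apply]; abel,
      K.coord_sub (K.rootLattice.smul_mem _ haQ) hβQ, K.coord_zsmul _ haQ, K.coord_alpha]
  have hzero : ∀ l, l ≠ a → K.coord β l = 0 := fun l hl => by
    have h := (K.mem_QP_iff.mp hneg).2 l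
    simp [hcoord, hl] at h
    exact le_antisymm h (hβc l)
  refine ⟨K.coord β a, ?_⟩
  conv_lhs => rw [← K.sum_coord_smul hβQ]
  exact Finset.sum_eq_single a (fun l _ hl => by rw [hzero l hl, zero_smul]) (by simp)

lemma mult_alpha_add_zsmul_alpha_eq_zero {l a : Fin n} (hla : l ≠ a) {e : ℤ} (he : e < 0) :
    K.mult (K.alpha l + e • K.alpha a) = 0 := by
  have haQ := K.alpha_mem_rootLattice a
  have hQ : K.alpha l + e • K.alpha a ∈ K.rootLattice :=
    add_mem (K.alpha_mem_rootLattice l) (K.rootLattice.smul_mem _ haQ)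
  have hcoord : K.coord (K.alpha l + e • K.alpha a) = Pi.single l 1 + e • Pi.single a 1 := by
    rw [K.coord_add (K.alpha_mem_rootLattice l) (K.rootLattice.smul_mem _ haQ),
      K.coord_zsmul _ haQ, K.coord_alpha, K.coord_alpha]
  by_contra hm
  rcases K.mem_QP_or_neg_mem_QP hm with h | h
  · have := (K.mem_QP_iff.mp h).2 a
    simp [hcoord, Ne.symm hla] at this
    omega
  · have := (K.mem_QP_iff.mp h).2 l
    rw [K.coord_neg hQ, hcoord] at this
    simp [hla] at this

lemma apply_alpha_eq_of_apply_eq_add_smul {t : AddAut V} (ht : t ∈ K.Wgrp) {a : Fin n}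
    (ψ : V →+ ℤ) (hψ : ψ (K.alpha a) = 0) (htψ : ∀ x, t x = x + ψ x • K.alpha a) (l : Fin n) :
    t (K.alpha l) = K.alpha l := by
  by_cases hla : l = a
  · rw [htψ, hla, hψ, zero_smul, add_zero]
  rcases lt_trichotomy (ψ (K.alpha l)) 0 with hneg | hzero | hpos
  · have := K.mult_apply_alpha ht l
    rw [htψ] at this
    exact absurd (K.mult_alpha_add_zsmul_alpha_eq_zero hla hneg) this
  · rw [htψ, hzero, zero_smul, add_zero]
  · have hinv : t⁻¹ (K.alpha l) = K.alpha l + (-ψ (K.alpha l)) • K.alpha a := by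
      rw [← addAut_inv_apply_self t (K.alpha l + _), htψ]
      simp [hψ]
    have := K.mult_apply_alpha (inv_mem ht) l
    rw [hinv] at this
    exact absurd (K.mult_alpha_add_zsmul_alpha_eq_zero hla (neg_neg_of_pos hpos)) this

lemma s_mul_mul_s_mul_inv_apply_alpha {u : AddAut V} (hu : u ∈ K.Wgrp) {a b : Fin n} {c : ℤ}
    (hub : u (K.alpha b) = c • K.alpha a) (l : Fin n) :
    (K.s a * u * K.s b * u⁻¹) (K.alpha l) = K.alpha l := by
  have hc : c * K.pair b (u⁻¹ (K.alpha a)) = 2 := by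
    rw [← K.pair_self b, ← smul_eq_mul, ← map_zsmul, ← map_zsmul, ← hub, addAut_inv_apply_self]
  refine K.apply_alpha_eq_of_apply_eq_add_smul (a := a)
    (mul_mem (mul_mem (mul_mem (K.s_mem_Wgrp a) hu) (K.s_mem_Wgrp b)) (inv_mem hu))
    (c • (K.pair b).comp (u⁻¹ : AddAut V).toAddMonoidHom - K.pair a) ?_ (fun x => ?_) l
  · simp [hc, K.pair_self]
  · simp only [addAut_mul_apply, s_apply, map_sub, map_zsmul, hub, addAut_apply_inv_self,
      K.pair_self, AddMonoidHom.sub_apply, AddMonoidHom.smul_apply, AddMonoidHom.comp_apply,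
      AddEquiv.coe_toAddMonoidHom, smul_eq_mul]
    module

/- `t` is the last index at which the suffix product `wordProd (L.drop t)` sends `α_b` to a
negative root; then `u α_b` is a multiple of `α_{L[t]}`, so `s_{L[t]} u s_b u⁻¹` acts trivially
on `Q`. -/
lemma exists_wordProd_eraseIdx_apply_eq {L : List (Fin n)} {b : Fin n}
    (hneg : K.wordProd L (K.alpha b) ∉ K.QP) :
    ∃ t < L.length, ∀ x ∈ K.rootLattice,
      K.wordProd (L ++ [b]) x = K.wordProd (L.eraseIdx t) x := by
  set P : ℕ → Prop := fun t => K.wordProd (L.drop t) (K.alpha b) ∈ K.QP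
  have hPlen : ∀ t, L.length ≤ t → P t := fun t ht => by
    simpa [P, List.drop_eq_nil_of_le ht] using K.alpha_mem_QP b
  obtain ⟨t, hPt, hPt1⟩ :=
    Nat.exists_not_and_succ_of_not_zero_of_exists (p := P) (by simpa [P] using hneg)
      ⟨L.length, hPlen _ le_rfl⟩
  have htL : t < L.length := lt_of_not_ge fun h => hPt (hPlen t h)
  set u := K.wordProd (L.drop (t + 1))
  have hdrop : K.wordProd (L.drop t) = K.s L[t] * u := by
    rw [List.drop_eq_getElem_cons htL, wordProd_cons]
  have hroot : -K.s L[t] (u (K.alpha b)) ∈ K.QP := by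
    have hm := K.mult_apply_alpha (K.wordProd_mem_Wgrp (L.drop t)) b
    rw [hdrop, addAut_mul_apply] at hm
    exact (K.mem_QP_or_neg_mem_QP hm).resolve_left (by simpa [P, hdrop] using hPt)
  obtain ⟨c, hc⟩ := K.exists_eq_zsmul_alpha_of_neg_s_mem_QP hPt1 hroot
  have hu := K.wordProd_mem_Wgrp (L.drop (t + 1))
  refine ⟨t, htL, fun x hx => ?_⟩
  have hfix := K.apply_eq_self_of_mem_rootLattice (K.s_mul_mul_s_mul_inv_apply_alpha hu hc)
    (K.apply_mem_rootLattice hu hx)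
  have hL : K.wordProd L = K.wordProd (L.take t) * (K.s L[t] * u) := by
    rw [← hdrop, ← wordProd_append, List.take_append_drop]
  rw [List.eraseIdx_eq_take_drop_succ, wordProd_append, wordProd_append, hL, wordProd_singleton]
  simpa using congrArg (K.wordProd (L.take t)) hfix

lemma wordProd_apply_alpha_eq_of_forall_mem_QP (l : List (Fin n))
    (hpos : ∀ j, K.wordProd l (K.alpha j) ∈ K.QP) (j : Fin n) :
    K.wordProd l (K.alpha j) = K.alpha j := by
  induction hl : l.length using Nat.strong_induction_on generalizing l with
  | _ m ih =>
    rcases l.eq_nil_or_concat' with rfl | ⟨L, b, rfl⟩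
    · rfl
    have hneg : K.wordProd L (K.alpha b) ∉ K.QP := fun h => by
      have hb := hpos b
      rw [wordProd_append, wordProd_singleton, addAut_mul_apply, s_alpha_self, map_neg] at hb
      exact K.alpha_ne_zero b (by simpa using K.eq_zero_of_mem_QP_of_neg_mem_QP h hb)
    obtain ⟨t, htL, heq⟩ := K.exists_wordProd_eraseIdx_apply_eq hneg
    have hlen : (L.eraseIdx t).length < m := by
      rw [← hl, List.length_eraseIdx_of_lt htL]; simp
    rw [heq _ (K.alpha_mem_rootLattice j)]
    exact ih _ hlen (L.eraseIdx t)
      (fun k => heq _ (K.alpha_mem_rootLattice k) ▸ hpos k) rfl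

lemma apply_alpha_eq_of_forall_mem_QP {w : AddAut V} (hw : w ∈ K.Wgrp)
    (hpos : ∀ j, w (K.alpha j) ∈ K.QP) (j : Fin n) : w (K.alpha j) = K.alpha j := by
  obtain ⟨l, rfl⟩ := K.exists_wordProd_eq hw
  exact K.wordProd_apply_alpha_eq_of_forall_mem_QP l hpos j

lemma eq_one_of_isOfFinOrder {w : AddAut V} (hw : w ∈ K.Wgrp)
    (hfix : ∀ j, w (K.alpha j) = K.alpha j) (hfin : IsOfFinOrder w) : w = 1 := by
  obtain ⟨N, hN, hwN⟩ := isOfFinOrder_iff_pow_eq_one.mp hfin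
  ext x
  have hd := K.apply_sub_self_mem_rootLattice hw x
  have hpow : ∀ k : ℕ, (w ^ k) x = x + k • (w x - x) := fun k => by
    induction k with
    | zero => simp
    | succ k ih =>
        rw [pow_succ', addAut_mul_apply, ih, map_add, map_nsmul,
          K.apply_eq_self_of_mem_rootLattice hfix hd, succ_nsmul]
        abel
  have h := hpow N
  rw [hwN, addAut_one_apply, left_eq_add] at h
  exact sub_eq_zero.mp (K.eq_zero_of_nsmul_eq_zero hd hN.ne' h)

end NoSimpleInversions

section Stabilizer

def stabilizer (μ : V) : Subgroup (AddAut V) where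
  carrier := {w | w ∈ K.Wgrp ∧ w μ = μ}
  mul_mem' ha hb := ⟨mul_mem ha.1 hb.1, by simp [ha.2, hb.2]⟩
  one_mem' := ⟨one_mem _, rfl⟩
  inv_mem' {w} hw := ⟨inv_mem hw.1, by conv_lhs => rw [← hw.2, addAut_inv_apply_self]⟩

def IsHighestInOrbit (ν : V) : Prop := ∀ w ∈ K.Wgrp, 0 ≤ K.ht (ν - w ν)

lemma exists_isHighestInOrbit {μ ρ₀ : V} (hpos : ∀ w ∈ K.Wgrp, ρ₀ - w μ ∈ K.QP) :
    ∃ w₀ ∈ K.Wgrp, K.IsHighestInOrbit (w₀ μ) := by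
  obtain ⟨h, ⟨w₀, hw₀, rfl⟩, hmin⟩ := Int.exists_least_of_bdd
    (P := fun z => ∃ w ∈ K.Wgrp, K.ht (ρ₀ - w μ) = z)
    ⟨0, fun _ ⟨w, hw, hz⟩ => hz ▸ K.ht_nonneg (hpos w hw)⟩ ⟨_, 1, one_mem _, rfl⟩
  refine ⟨w₀, hw₀, fun w hw => ?_⟩
  have hle := hmin _ ⟨w * w₀, mul_mem hw hw₀, rfl⟩
  rw [show w₀ μ - w (w₀ μ) = (ρ₀ - (w * w₀) μ) - (ρ₀ - w₀ μ) by simp,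
    K.ht_sub (K.mem_rootLattice_of_mem_QP (hpos _ (mul_mem hw hw₀)))
      (K.mem_rootLattice_of_mem_QP (hpos _ hw₀))]
  omega

lemma mul_ht_apply_alpha_nonneg {ν : V} (hν : K.IsHighestInOrbit ν) {g : AddAut V}
    (hg : g ∈ K.stabilizer ν) (j : Fin n) :
    0 ≤ K.pair j ν * K.ht (g (K.alpha j)) := by
  have h := hν _ (mul_mem hg.1 (K.s_mem_Wgrp j))
  rwa [show ν - (g * K.s j) ν = K.pair j ν • g (K.alpha j) by simp [s_apply, hg.2],
    K.ht_zsmul _ (K.apply_mem_rootLattice hg.1 (K.alpha_mem_rootLattice j))] at h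

lemma pair_nonneg_of_isHighestInOrbit {ν : V} (hν : K.IsHighestInOrbit ν) (j : Fin n) :
    0 ≤ K.pair j ν := by
  simpa [K.ht_alpha] using K.mul_ht_apply_alpha_nonneg hν (one_mem _) j

lemma apply_alpha_mem_QP_of_isHighestInOrbit {ν : V} (hν : K.IsHighestInOrbit ν)
    {g : AddAut V} (hg : g ∈ K.stabilizer ν) {j : Fin n} (hj : 0 < K.pair j ν) :
    g (K.alpha j) ∈ K.QP := by
  refine (K.mem_QP_or_neg_mem_QP (K.mult_apply_alpha hg.1 j)).resolve_right fun hneg => ?_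
  have hne : -g (K.alpha j) ≠ 0 := by simpa using K.alpha_ne_zero j
  have hlt := K.ht_pos hneg hne
  rw [K.ht_neg (K.apply_mem_rootLattice hg.1 (K.alpha_mem_rootLattice j))] at hlt
  nlinarith [K.mul_ht_apply_alpha_nonneg hν hg j]

lemma eq_one_of_mem_stabilizer_of_isHighestInOrbit {ν : V} (hν : K.IsHighestInOrbit ν)
    (hreg : ∀ j, 0 < K.pair j ν) {g : AddAut V} (hg : g ∈ K.stabilizer ν)
    (hfin : IsOfFinOrder g) : g = 1 :=
  K.eq_one_of_isOfFinOrder hg.1 (K.apply_alpha_eq_of_forall_mem_QP hg.1 fun j =>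
    K.apply_alpha_mem_QP_of_isHighestInOrbit hν hg (hreg j)) hfin

lemma exists_sgn_eq_neg_one_mem_stabilizer {μ ρ₀ : V} (hpos : ∀ w ∈ K.Wgrp, ρ₀ - w μ ∈ K.QP)
    (hfin : Finite (K.stabilizer μ)) {σ : AddAut V} (hσ : σ ∈ K.stabilizer μ) (hσ1 : σ ≠ 1) :
    ∃ τ ∈ K.stabilizer μ, K.sgn τ = -1 := by
  obtain ⟨w₀, hw₀, hν⟩ := K.exists_isHighestInOrbit hpos
  by_cases hsing : ∃ i, K.pair i (w₀ μ) = 0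
  · obtain ⟨i, hi⟩ := hsing
    refine ⟨w₀⁻¹ * K.s i * w₀, ⟨mul_mem (mul_mem (inv_mem hw₀) (K.s_mem_Wgrp i)) hw₀, ?_⟩, ?_⟩
    · simp [s_apply, hi]
    · have hinv : K.sgn w₀⁻¹ * K.sgn w₀ = 1 := by
        rw [← K.sgn_mul (inv_mem hw₀) hw₀, inv_mul_cancel, K.sgn_one]
      rw [K.sgn_mul (mul_mem (inv_mem hw₀) (K.s_mem_Wgrp i)) hw₀,
        K.sgn_mul (inv_mem hw₀) (K.s_mem_Wgrp i), K.sgn_s]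
      linear_combination -hinv
  · simp only [not_exists] at hsing
    have hreg : ∀ j, 0 < K.pair j (w₀ μ) := fun j =>
      (K.pair_nonneg_of_isHighestInOrbit hν j).lt_of_ne (Ne.symm (hsing j))
    have hconj : IsConj σ (w₀ * σ * w₀⁻¹) := isConj_iff.mpr ⟨w₀, rfl⟩
    have hσ' : w₀ * σ * w₀⁻¹ ∈ K.stabilizer (w₀ μ) :=
      ⟨mul_mem (mul_mem hw₀ hσ.1) (inv_mem hw₀), by simp [hσ.2]⟩
    refine absurd ?_ hσ1
    have h1 := K.eq_one_of_mem_stabilizer_of_isHighestInOrbit hν hreg hσ' (hconj.isOfFinOrder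
      (Submonoid.isOfFinOrder_coe.mpr (isOfFinOrder_of_finite (⟨σ, hσ⟩ : K.stabilizer μ))))
    simpa [mul_inv_eq_one] using h1

end Stabilizer

section Xi

lemma xiFun_eq_finsum_sgn (ρ lam v : V) :
    K.xiFun ρ lam v = ∑ᶠ w ∈ {w : AddAut V | w ∈ K.Wgrp ∧ w (lam + ρ) - ρ = v}, K.sgn w :=
  finsum_mem_congr rfl fun _ hw => (K.sgn_eq_neg_one_pow_len hw.1).symm

lemma xiFun_eq_zero_of_sgn_eq_neg_one {ρ lam : V} {τ : AddAut V}
    (hτ : τ ∈ K.stabilizer (lam + ρ)) (hsgn : K.sgn τ = -1) (v : V) : K.xiFun ρ lam v = 0 := by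
  rw [xiFun_eq_finsum_sgn]
  refine finsum_mem_eq_zero_of_bijOn_of_neg (· * τ) ⟨fun w hw => ?_,
    (mul_left_injective τ).injOn, fun w hw => ⟨w * τ⁻¹, ?_, inv_mul_cancel_right w τ⟩⟩
    fun w hw => by rw [K.sgn_mul hw.1 hτ.1, hsgn, mul_neg_one]
  · exact ⟨mul_mem hw.1 hτ.1, by simpa [hτ.2] using hw.2⟩
  · have hτ' := (K.stabilizer (lam + ρ)).inv_mem hτ
    exact ⟨mul_mem hw.1 hτ'.1, by simpa [hτ'.2] using hw.2⟩

lemma finite_stabilizer_of_xiFun_ne_zero {ρ lam v : V} (h : K.xiFun ρ lam v ≠ 0) :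
    Finite (K.stabilizer (lam + ρ)) := by
  set S := {w : AddAut V | w ∈ K.Wgrp ∧ w (lam + ρ) - ρ = v}
  have hS : S.Finite := by
    by_contra hinf
    refine h (finsum_mem_eq_zero_of_infinite ?_)
    simpa [Function.support, S] using hinf
  obtain ⟨w₁, hw₁⟩ : S.Nonempty := by
    by_contra hemp
    exact h ((finsum_mem_congr (Set.not_nonempty_iff_eq_empty.mp hemp) fun _ _ => rfl).trans
      finsum_mem_empty)
  refine Set.Finite.to_subtype ((hS.preimage (mul_right_injective w₁).injOn).subset ?_)
  intro w hw
  exact ⟨mul_mem hw₁.1 hw.1, by simpa [hw.2] using hw₁.2⟩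

lemma xiFun_self_eq_one {ρ lam : V} (htriv : ∀ w ∈ K.Wgrp, w (lam + ρ) - ρ = lam → w = 1) :
    K.xiFun ρ lam lam = 1 := by
  have hS : {w : AddAut V | w ∈ K.Wgrp ∧ w (lam + ρ) - ρ = lam} = {1} := by
    ext w
    refine ⟨fun hw => htriv w hw.1 hw.2, ?_⟩
    rintro rfl
    exact ⟨one_mem _, by simp⟩
  rw [xiFun, hS, finsum_mem_singleton, K.len_one, pow_zero]

end Xi

end KacMoody

theorem xi_ne_zero_iff_trivial_stabilizer_general
    (n : ℕ) (V : Type) [AddCommGroup V] (K : KacMoody n V)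
    (ρ : V) :
    ∀ lam ∈ K.Qprime ρ,
      ((∃ v : V, K.xiFun ρ lam v ≠ 0) ↔
        (∀ w ∈ K.Wgrp, w (lam + ρ) - ρ = lam → w = 1)) := by
  intro lam hlam
  have hpos : ∀ w ∈ K.Wgrp, ρ - w (lam + ρ) ∈ K.QP := fun w hw => by
    simpa using hlam w hw
  constructor
  · rintro ⟨v, hv⟩ σ hσ hσfix
    by_contra hσ1
    obtain ⟨τ, hτ, hτsgn⟩ := K.exists_sgn_eq_neg_one_mem_stabilizer hpos
      (K.finite_stabilizer_of_xiFun_ne_zero hv) ⟨hσ, sub_eq_iff_eq_add.mp hσfix⟩ hσ1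
    exact hv (K.xiFun_eq_zero_of_sgn_eq_neg_one hτ hτsgn v)
  · intro htriv
    exact ⟨lam, by rw [K.xiFun_self_eq_one htriv]; exact one_ne_zero⟩

/-- **Lemma (non-vanishing of `ξ^λ`).**
For `λ ∈ Q' = ⋂_{w ∈ W} w∘Q⁻`, the formal sum
`ξ^λ = Σ_{w ∈ W} (-1)^{ℓ(w)} e^{w∘λ}` is non-zero (i.e. some coefficient is non-zero)
if and only if the stabilizer `W_λ^∘ = {w ∈ W : w∘λ = λ}` of `λ` under the circle
action is trivial. -/
theorem xi_ne_zero_iff_trivial_stabilizer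
    (n : ℕ) (V : Type) [AddCommGroup V] (K : KacMoody n V)
    (ρ : V) (hρ : ∀ i, K.pair i ρ = 1) :
    ∀ lam ∈ K.Qprime ρ,
      ((∃ v : V, K.xiFun ρ lam v ≠ 0) ↔
        (∀ w ∈ K.Wgrp, w (lam + ρ) - ρ = lam → w = 1)) :=
  xi_ne_zero_iff_trivial_stabilizer_general n V K ρ
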